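/- arXiv:1801.00523 — 2 statements merged into one kernel-verified Lean document; each statement's English description precedes it below -/
import Mathlib

section
/- (Theorem 3, asymptotic variance of the squared IQR ratio.) Let p ∈ (0,1/2). Let X be a real random variable with ℙ(X ≤ x_p) = p and ℙ(X ≤ x_{1-p}) = 1-p for constants x_p < x_{1-p}, and Y a real random variable with ℙ(Y ≤ y_p) = p and ℙ(Y ≤ y_{1-p}) = 1-p for constants y_p < y_{1-p}. Let g₁(p), g₁(1-p), g₂(p), g₂(1-p) > 0 be constants, w₁, w₂ > 0, and R_p = [(x_{1-p} - x_p)/(y_{1-p} - y_p)]². Define PIF₁(x) = (2R_p/(x_{1-p} - x_p))·[ ((1-p) - 1{x ≤ x_{1-p}})g₁(1-p) - (p - 1{x ≤ x_p})g₁(p) ] and PIF₂(y) = -(2R_p/(y_{1-p} - y_p))·[ ((1-p) - 1{y ≤ y_{1-p}})g₂(1-p) - (p - 1{y ≤ y_p})g₂(p) ]. Then (1/w₁)E[PIF₁(X)²] + (1/w₂)E[PIF₂(Y)²] = 4pR_p²·{ [g₁(p)² + g₁(1-p)² - p(g₁(p) + g₁(1-p))²]/(w₁(x_{1-p} - x_p)²)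 + [g₂(p)² + g₂(1-p)² - p(g₂(p) + g₂(1-p))²]/(w₂(y_{1-p} - y_p)²) }. -/
/-!
Each partial influence function is a constant multiple of `IF(·; Q_{1-p}) - IF(·; Q_p)`, a step
function of the observation with three values, on `X ≤ x_p`, `x_p < X ≤ x_{1-p}` and `x_{1-p} < X`,
taken with probabilities `p`, `1 - 2p` and `p`. Its second moment is therefore
`p (g² + g'² - p (g + g')²)`, and the rest is algebra.
-/

open MeasureTheory Set

/-- `IF(x; Q_q, F)`, where `x_q` is the `q`th quantile and `g` the quantile density `1 / f(x_q)`. -/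
noncomputable def quantileIF (q x_q g x : ℝ) : ℝ :=
  (q - if x ≤ x_q then 1 else 0) * g

section StepFunction

variable {Ω : Type*} [MeasurableSpace Ω] (P : Measure Ω) [IsProbabilityMeasure P]
  {X : Ω → ℝ} {a b : ℝ}

lemma integral_ite_le_ite_le (hX : Measurable X) (hab : a ≤ b) (v₁ v₂ v₃ : ℝ) :
    ∫ ω, (if X ω ≤ a then v₁ else if X ω ≤ b then v₂ else v₃) ∂P
      = v₃ + (v₂ - v₃) * (P {ω | X ω ≤ b}).toReal + (v₁ - v₂) * (P {ω | X ω ≤ a}).toReal := by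
  have ha : MeasurableSet {ω | X ω ≤ a} := measurableSet_le hX measurable_const
  have hb : MeasurableSet {ω | X ω ≤ b} := measurableSet_le hX measurable_const
  have hia : Integrable ({ω | X ω ≤ a}.indicator fun _ ↦ v₁ - v₂) P :=
    (integrable_const _).indicator ha
  have hib : Integrable ({ω | X ω ≤ b}.indicator fun _ ↦ v₂ - v₃) P :=
    (integrable_const _).indicator hb
  have hsplit : (fun ω ↦ if X ω ≤ a then v₁ else if X ω ≤ b then v₂ else v₃)
      = fun ω ↦ v₃ + ({ω | X ω ≤ b}.indicator (fun _ ↦ v₂ - v₃)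
          + {ω | X ω ≤ a}.indicator (fun _ ↦ v₁ - v₂)) ω := by
    funext ω
    simp only [Pi.add_apply, indicator_apply, mem_ofPred_eq]
    split_ifs <;> first | (exfalso; linarith) | ring
  rw [hsplit, integral_add (integrable_const v₃) (hib.add hia), integral_add' hib hia,
    integral_const, integral_indicator_const _ hb, integral_indicator_const _ ha]
  simp only [smul_eq_mul, measureReal_def, measure_univ, ENNReal.toReal_one, one_mul]
  ring

lemma integral_quantileIF_sub_sq (hX : Measurable X) (hab : a ≤ b) {p : ℝ}
    (hPa : (P {ω | X ω ≤ a}).toReal = p) (hPb : (P {ω | X ω ≤ b}).toReal = 1 - p) (g g' : ℝ) :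
    ∫ ω, (quantileIF (1 - p) b g' (X ω) - quantileIF p a g (X ω)) ^ 2 ∂P
      = p * (g ^ 2 + g' ^ 2 - p * (g + g') ^ 2) := by
  have hstep : (fun ω ↦ (quantileIF (1 - p) b g' (X ω) - quantileIF p a g (X ω)) ^ 2)
      = fun ω ↦ if X ω ≤ a then ((1 - p - 1) * g' - (p - 1) * g) ^ 2
          else if X ω ≤ b then ((1 - p - 1) * g' - p * g) ^ 2
          else ((1 - p) * g' - p * g) ^ 2 := by
    funext ω
    simp only [quantileIF]
    split_ifs <;> first | (exfalso; linarith) | ring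
  rw [hstep, integral_ite_le_ite_le P hX hab, hPa, hPb]
  ring

lemma integral_mul_quantileIF_sub_sq (hX : Measurable X) (hab : a ≤ b) {p : ℝ}
    (hPa : (P {ω | X ω ≤ a}).toReal = p) (hPb : (P {ω | X ω ≤ b}).toReal = 1 - p)
    (K g g' : ℝ) :
    ∫ ω, (K * (quantileIF (1 - p) b g' (X ω) - quantileIF p a g (X ω))) ^ 2 ∂P
      = K ^ 2 * (p * (g ^ 2 + g' ^ 2 - p * (g + g') ^ 2)) := by
  simp_rw [mul_pow]
  rw [integral_const_mul, integral_quantileIF_sub_sq P hX hab hPa hPb]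

end StepFunction

theorem ASV_squared_IQR_ratio_general
    {Ω₁ Ω₂ : Type*} [MeasurableSpace Ω₁] [MeasurableSpace Ω₂]
    (P₁ : Measure Ω₁) (P₂ : Measure Ω₂)
    [IsProbabilityMeasure P₁] [IsProbabilityMeasure P₂]
    (p : ℝ)
    (X : Ω₁ → ℝ) (Y : Ω₂ → ℝ) (hX : Measurable X) (hY : Measurable Y)
    (x_p x_1p y_p y_1p : ℝ) (hx : x_p < x_1p) (hy : y_p < y_1p)
    (hXp : (P₁ {ω | X ω ≤ x_p}).toReal = p)
    (hX1p : (P₁ {ω | X ω ≤ x_1p}).toReal = 1 - p)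
    (hYp : (P₂ {ω | Y ω ≤ y_p}).toReal = p)
    (hY1p : (P₂ {ω | Y ω ≤ y_1p}).toReal = 1 - p)
    (g₁p g₁1p g₂p g₂1p : ℝ)
    (w₁ w₂ : ℝ)
    (R_p : ℝ) :
    (1 / w₁) *
        ∫ ω, (2 * R_p / (x_1p - x_p)
          * (((1 - p) - (if X ω ≤ x_1p then (1 : ℝ) else 0)) * g₁1p
            - (p - (if X ω ≤ x_p then (1 : ℝ) else 0)) * g₁p)) ^ 2 ∂P₁
      + (1 / w₂) *
        ∫ ω, (-(2 * R_p / (y_1p - y_p))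
          * (((1 - p) - (if Y ω ≤ y_1p then (1 : ℝ) else 0)) * g₂1p
            - (p - (if Y ω ≤ y_p then (1 : ℝ) else 0)) * g₂p)) ^ 2 ∂P₂
      = 4 * p * R_p ^ 2
        * ((g₁p ^ 2 + g₁1p ^ 2 - p * (g₁p + g₁1p) ^ 2) / (w₁ * (x_1p - x_p) ^ 2)
          + (g₂p ^ 2 + g₂1p ^ 2 - p * (g₂p + g₂1p) ^ 2) / (w₂ * (y_1p - y_p) ^ 2)) := by
  have h₁ := integral_mul_quantileIF_sub_sq P₁ hX hx.le hXp hX1p (2 * R_p / (x_1p - x_p)) g₁p g₁1p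
  have h₂ := integral_mul_quantileIF_sub_sq P₂ hY hy.le hYp hY1p (-(2 * R_p / (y_1p - y_p)))
    g₂p g₂1p
  simp only [quantileIF] at h₁ h₂
  rw [h₁, h₂]
  simp only [div_eq_mul_inv, mul_inv, ← inv_pow]
  ring

/-- Theorem 3 (asymptotic variance of the squared IQR ratio):
`(1/w₁) E[PIF₁(X)²] + (1/w₂) E[PIF₂(Y)²]` equals
`4 p R_p² { [g₁(p)² + g₁(1-p)² - p(g₁(p)+g₁(1-p))²]/(w₁ (x_{1-p}-x_p)²)
          + [g₂(p)² + g₂(1-p)² - p(g₂(p)+g₂(1-p))²]/(w₂ (y_{1-p}-y_p)²) }`. -/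
theorem ASV_squared_IQR_ratio
    {Ω₁ Ω₂ : Type*} [MeasurableSpace Ω₁] [MeasurableSpace Ω₂]
    (P₁ : Measure Ω₁) (P₂ : Measure Ω₂)
    [IsProbabilityMeasure P₁] [IsProbabilityMeasure P₂]
    (p : ℝ) (hp : p ∈ Set.Ioo (0 : ℝ) (1 / 2))
    (X : Ω₁ → ℝ) (Y : Ω₂ → ℝ) (hX : Measurable X) (hY : Measurable Y)
    (x_p x_1p y_p y_1p : ℝ) (hx : x_p < x_1p) (hy : y_p < y_1p)
    (hXp : (P₁ {ω | X ω ≤ x_p}).toReal = p)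
    (hX1p : (P₁ {ω | X ω ≤ x_1p}).toReal = 1 - p)
    (hYp : (P₂ {ω | Y ω ≤ y_p}).toReal = p)
    (hY1p : (P₂ {ω | Y ω ≤ y_1p}).toReal = 1 - p)
    (g₁p g₁1p g₂p g₂1p : ℝ)
    (hg₁p : 0 < g₁p) (hg₁1p : 0 < g₁1p) (hg₂p : 0 < g₂p) (hg₂1p : 0 < g₂1p)
    (w₁ w₂ : ℝ) (hw₁ : 0 < w₁) (hw₂ : 0 < w₂)
    (R_p : ℝ) (hR : R_p = ((x_1p - x_p) / (y_1p - y_p)) ^ 2) :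
    (1 / w₁) *
        ∫ ω, (2 * R_p / (x_1p - x_p)
          * (((1 - p) - (if X ω ≤ x_1p then (1 : ℝ) else 0)) * g₁1p
            - (p - (if X ω ≤ x_p then (1 : ℝ) else 0)) * g₁p)) ^ 2 ∂P₁
      + (1 / w₂) *
        ∫ ω, (-(2 * R_p / (y_1p - y_p))
          * (((1 - p) - (if Y ω ≤ y_1p then (1 : ℝ) else 0)) * g₂1p
            - (p - (if Y ω ≤ y_p then (1 : ℝ) else 0)) * g₂p)) ^ 2 ∂P₂
      = 4 * p * R_p ^ 2
        * ((g₁p ^ 2 + g₁1p ^ 2 - p * (g₁p + g₁1p) ^ 2) / (w₁ * (x_1p - x_p) ^ 2)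
          + (g₂p ^ 2 + g₂1p ^ 2 - p * (g₂p + g₂1p) ^ 2) / (w₂ * (y_1p - y_p) ^ 2)) :=
  ASV_squared_IQR_ratio_general P₁ P₂ p X Y hX hY x_p x_1p y_p y_1p hx hy hXp hX1p hYp hY1p g₁p g₁1p
    g₂p g₂1p w₁ w₂ R_p
end

section
/- (Second partial influence function of the ratio of variances.) Let μ₂ be a Borel probability measure on ℝ with finite second moment, mean m₂ and variance σ₂² > 0, let σ₁² > 0 be a constant, and fix x₀ ∈ ℝ. For ε ∈ [0,1] let ν_ε = (1-ε)·μ₂ + ε·δ_{x₀}, m_ε = ∫x dν_ε and V₂(ε) = ∫(x - m_ε)² dν_ε. Then the function ε ↦ σ₁²/V₂(ε) has right derivative at ε = 0 equal to -ρ(z₂² - 1), where ρ = σ₁²/σ₂² and z₂ = (x₀ - m₂)/σ₂. -/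
open MeasureTheory Set

/-! The contaminated mean is `(1-ε)m₂ + εx₀`, and the bias–variance decomposition turns the
contaminated variance into the quadratic `(1-ε)(σ₂² + ε(x₀ - m₂)²)`, whose derivative at `0` is
`(x₀ - m₂)² - σ₂²`. The quotient rule then gives `-(σ₁²/σ₂²)((x₀ - m₂)²/σ₂² - 1)`. -/

/-- The contaminated distribution `ν_ε = (1-ε)·μ + ε·δ_{x₀}`. -/
noncomputable def contamMeasure (μ : Measure ℝ) (x₀ ε : ℝ) : Measure ℝ :=
  ENNReal.ofReal (1 - ε) • μ + ENNReal.ofReal ε • Measure.dirac x₀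

open ProbabilityTheory in
lemma integral_sub_sq_eq_integral_sub_mean_sq_add {Ω : Type*} [MeasurableSpace Ω]
    {μ : Measure Ω} [IsProbabilityMeasure μ] {X : Ω → ℝ} (hX : MemLp X 2 μ) (c : ℝ) :
    ∫ ω, (X ω - c) ^ 2 ∂μ = ∫ ω, (X ω - μ[X]) ^ 2 ∂μ + (μ[X] - c) ^ 2 := by
  have hXc : MemLp (fun ω => X ω - c) 2 μ := hX.sub (memLp_const c)
  have hmean : μ[fun ω => X ω - c] = μ[X] - c := by
    rw [integral_sub (hX.integrable one_le_two) (integrable_const c), integral_const]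
    simp
  have hvar := variance_eq_sub hXc
  rw [variance_sub_const hX.aestronglyMeasurable, variance_eq_integral hX.aemeasurable,
    hmean] at hvar
  simp only [Pi.pow_apply] at hvar
  linarith

section contamMeasure

variable {μ : Measure ℝ} {x₀ ε : ℝ}

lemma integral_contamMeasure (hε₀ : 0 ≤ ε) (hε₁ : ε ≤ 1) {f : ℝ → ℝ} (hf : Integrable f μ) :
    ∫ x, f x ∂(contamMeasure μ x₀ ε) = (1 - ε) * ∫ x, f x ∂μ + ε * f x₀ := by
  rw [contamMeasure, integral_add_measure (hf.smul_measure ENNReal.ofReal_ne_top)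
      ((integrable_dirac enorm_lt_top).smul_measure ENNReal.ofReal_ne_top),
    integral_smul_measure, integral_smul_measure, integral_dirac,
    ENNReal.toReal_ofReal (sub_nonneg.2 hε₁), ENNReal.toReal_ofReal hε₀, smul_eq_mul, smul_eq_mul]

lemma integral_sub_mean_sq_contamMeasure [IsProbabilityMeasure μ]
    (hL2 : MemLp (fun x : ℝ => x) 2 μ) (hε₀ : 0 ≤ ε) (hε₁ : ε ≤ 1) :
    ∫ x, (x - ∫ y, y ∂(contamMeasure μ x₀ ε)) ^ 2 ∂(contamMeasure μ x₀ ε)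
      = (1 - ε) * (∫ x, (x - ∫ y, y ∂μ) ^ 2 ∂μ + ε * (x₀ - ∫ y, y ∂μ) ^ 2) := by
  have hsq (c : ℝ) : Integrable (fun x : ℝ => (x - c) ^ 2) μ :=
    (hL2.sub (memLp_const c)).integrable_sq
  rw [integral_contamMeasure hε₀ hε₁ (hL2.integrable one_le_two),
    integral_contamMeasure hε₀ hε₁ (hsq _),
    integral_sub_sq_eq_integral_sub_mean_sq_add hL2]
  ring

end contamMeasure

lemma hasDerivAt_div_mul_one_sub_mul_add {a s d : ℝ} (hs : s ≠ 0) :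
    HasDerivAt (fun ε : ℝ => a / ((1 - ε) * (s + ε * d))) (-(a / s * (d / s - 1))) 0 := by
  have hden : HasDerivAt (fun ε : ℝ => (1 - ε) * (s + ε * d))
      ((-1) * (s + 0 * d) + (1 - 0) * (1 * d)) 0 :=
    ((hasDerivAt_id 0).const_sub 1).mul (((hasDerivAt_id 0).mul_const d).const_add s)
  refine ((hasDerivAt_const (0 : ℝ) a).div hden (by simpa using hs)).congr_deriv ?_
  simp only [sub_zero, zero_mul, add_zero, one_mul, neg_mul]
  field_simp
  ring

theorem PIF2_ratio_of_variances_general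
    (μ₂ : Measure ℝ) [IsProbabilityMeasure μ₂]
    (hL2 : MemLp (fun x : ℝ => x) 2 μ₂)
    (m₂ : ℝ) (hm₂ : m₂ = ∫ x, x ∂μ₂)
    (σ₁ σ₂ : ℝ) (hσ₂ : 0 < σ₂)
    (hvar₂ : σ₂ ^ 2 = ∫ x, (x - m₂) ^ 2 ∂μ₂)
    (x₀ : ℝ) :
    HasDerivWithinAt
      (fun ε =>
        σ₁ ^ 2 / ∫ x, (x - ∫ y, y ∂(contamMeasure μ₂ x₀ ε)) ^ 2 ∂(contamMeasure μ₂ x₀ ε))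
      (-((σ₁ ^ 2 / σ₂ ^ 2) * (((x₀ - m₂) / σ₂) ^ 2 - 1))) (Set.Ici 0) 0 := by
  have hvariance {ε : ℝ} (hε : ε ∈ Ico 0 1) :
      ∫ x, (x - ∫ y, y ∂(contamMeasure μ₂ x₀ ε)) ^ 2 ∂(contamMeasure μ₂ x₀ ε)
        = (1 - ε) * (σ₂ ^ 2 + ε * (x₀ - m₂) ^ 2) := by
    rw [integral_sub_mean_sq_contamMeasure hL2 hε.1 hε.2.le, ← hm₂, ← hvar₂]
  have hderiv := hasDerivAt_div_mul_one_sub_mul_add (a := σ₁ ^ 2) (d := (x₀ - m₂) ^ 2)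
    (pow_ne_zero 2 hσ₂.ne')
  rw [div_pow (x₀ - m₂)]
  refine hderiv.hasDerivWithinAt.congr_of_eventuallyEq_of_mem ?_ self_mem_Ici
  filter_upwards [Ico_mem_nhdsGE one_pos] with ε hε
  rw [hvariance hε]

/-- Second partial influence function of the ratio of variances:
`ε ↦ σ₁²/V₂(ε)` has right derivative `-ρ(z₂² - 1)` at `ε = 0`, where
`V₂(ε)` is the variance of the contaminated second distribution, `ρ = σ₁²/σ₂²` and
`z₂ = (x₀ - m₂)/σ₂`. -/
theorem PIF2_ratio_of_variances
    (μ₂ : Measure ℝ) [IsProbabilityMeasure μ₂]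
    (hL2 : MemLp (fun x : ℝ => x) 2 μ₂)
    (m₂ : ℝ) (hm₂ : m₂ = ∫ x, x ∂μ₂)
    (σ₁ σ₂ : ℝ) (hσ₁ : 0 < σ₁) (hσ₂ : 0 < σ₂)
    (hvar₂ : σ₂ ^ 2 = ∫ x, (x - m₂) ^ 2 ∂μ₂)
    (x₀ : ℝ) :
    HasDerivWithinAt
      (fun ε =>
        σ₁ ^ 2 / ∫ x, (x - ∫ y, y ∂(contamMeasure μ₂ x₀ ε)) ^ 2 ∂(contamMeasure μ₂ x₀ ε))
      (-((σ₁ ^ 2 / σ₂ ^ 2) * (((x₀ - m₂) / σ₂) ^ 2 - 1))) (Set.Ici 0) 0 :=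
  PIF2_ratio_of_variances_general μ₂ hL2 m₂ hm₂ σ₁ σ₂ hσ₂ hvar₂ x₀
end
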